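/- Finite trees glue along orbit cuts: Let Σ₁ be a section in ℤQ (Q a finite tree quiver), and suppose removing an edge L — N of Σ₁ splits it into two subtrees Σ₁^M (containing a fixed vertex M and L) and Σ₁^N (containing N). If the arrow is L → N, then the full subquiver Σ₂ of ℤQ on the vertices of Σ₁^M ∪ τΣ₁^N is again a section of ℤQ containing M and meeting every τ-orbit exactly once. -/

import Mathlib

namespace Stmt14

variable {Q0 : Type*}

def ZArrow (QArrow : Q0 → Q0 → Prop) : ℤ × Q0 → ℤ × Q0 → Prop :=
  fun x y => (y.1 = x.1 ∧ QArrow x.2 y.2) ∨ (y.1 = x.1 + 1 ∧ QArrow y.2 x.2)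

def tauZQ (Q0 : Type*) : Equiv.Perm (ℤ × Q0) :=
  ⟨fun x => (x.1 - 1, x.2), fun x => (x.1 + 1, x.2),
    fun x => by simp, fun x => by simp⟩

def IsPathOn {V : Type*} (Arrow : V → V → Prop) (p : ℕ → V) (t : ℕ) : Prop :=
  ∀ i < t, Arrow (p i) (p (i + 1))

/-- Connectedness of the full subquiver on `S`. -/
def ConnectedOn {V : Type*} (Arrow : V → V → Prop) (S : Set V) : Prop :=
  ∀ x ∈ S, ∀ y ∈ S, Relation.ReflTransGen
    (fun a b => a ∈ S ∧ b ∈ S ∧ (Arrow a b ∨ Arrow b a)) x y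

def IsSection {V : Type*} (Arrow : V → V → Prop) (τ : Equiv.Perm V) (S : Set V) : Prop :=
  ConnectedOn Arrow S ∧
  (∀ (p : ℕ → V) (t : ℕ), 0 < t → IsPathOn Arrow p t → (∀ i ≤ t, p i ∈ S) → p 0 ≠ p t) ∧
  (∀ x : V, ∃! n : ℤ, (τ ^ n) x ∈ S) ∧
  (∀ (p : ℕ → V) (t : ℕ), IsPathOn Arrow p t → p 0 ∈ S → p t ∈ S → ∀ i ≤ t, p i ∈ S)

/-- The underlying graph of the quiver Q. -/
def underlyingGraph (QArrow : Q0 → Q0 → Prop) : SimpleGraph Q0 where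
  Adj a b := a ≠ b ∧ (QArrow a b ∨ QArrow b a)
  symm := ⟨fun a b h => ⟨h.1.symm, h.2.symm⟩⟩
  loopless := ⟨fun a h => h.1 rfl⟩

/-! A section of ℤQ meets every τ-orbit `ℤ × {q}` once, so it is the graph `{(f q, q)}` of a
height function `f : Q₀ → ℤ`. For a tree Q the sections are exactly the graphs of heights with
`f q ∈ {f p, f p - 1}` for every arrow `p → q`: such a graph is connected because Q is, and it is
convex and acyclic because `x.1 - f x.2` and `x.1` never decrease along arrows of ℤQ. The set
`Σ₁^M ∪ τΣ₁^N` is the graph of `f` lowered by one on `Σ₁^N`; this changes the height difference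
only across the edge `L — N`, and since the arrow goes from `L` to `N` the new difference is
again admissible. -/

section Paths

variable {V : Type*} {R : V → V → Prop} {p : ℕ → V} {t : ℕ}

def HasNoDirectedCycle (R : V → V → Prop) : Prop :=
  ∀ (p : ℕ → V) (t : ℕ), 0 < t → IsPathOn R p t → p 0 ≠ p t

theorem IsPathOn.apply_le_apply (hp : IsPathOn R p t) (u : V → ℤ)
    (hu : ∀ a b, R a b → u a ≤ u b) {i j : ℕ} (hij : i ≤ j) (hjt : j ≤ t) :
    u (p i) ≤ u (p j) := by
  induction j, hij using Nat.le_induction with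
  | base => exact le_rfl
  | succ j _ ih => exact (ih (by omega)).trans (hu _ _ (hp j (by omega)))

theorem IsPathOn.apply_eq_of_apply_eq (hp : IsPathOn R p t) (u : V → ℤ)
    (hu : ∀ a b, R a b → u a ≤ u b) (hend : u (p t) = u (p 0)) {i : ℕ} (hit : i ≤ t) :
    u (p i) = u (p 0) :=
  le_antisymm (hend ▸ hp.apply_le_apply u hu hit le_rfl) (hp.apply_le_apply u hu i.zero_le hit)

end Paths

variable {QArrow : Q0 → Q0 → Prop}

@[simp]
theorem tauZQ_apply (x : ℤ × Q0) : tauZQ Q0 x = (x.1 - 1, x.2) := rfl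

@[simp]
theorem tauZQ_inv_apply (x : ℤ × Q0) : (tauZQ Q0)⁻¹ x = (x.1 + 1, x.2) := rfl

theorem tauZQ_zpow_apply (n : ℤ) (x : ℤ × Q0) : (tauZQ Q0 ^ n) x = (x.1 - n, x.2) := by
  induction n using Int.induction_on generalizing x with
  | zero => simp
  | succ k ih =>
    rw [zpow_add_one, Equiv.Perm.mul_apply, ih, tauZQ_apply]
    exact Prod.ext (by dsimp only; ring) rfl
  | pred k ih =>
    rw [zpow_sub_one, Equiv.Perm.mul_apply, ih, tauZQ_inv_apply]
    exact Prod.ext (by dsimp only; ring) rfl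

theorem mem_image_tauZQ {S : Set (ℤ × Q0)} {x : ℤ × Q0} :
    x ∈ tauZQ Q0 '' S ↔ (x.1 + 1, x.2) ∈ S := by
  rw [Equiv.image_eq_preimage_symm]
  rfl

theorem ZArrow.fst_le {x y : ℤ × Q0} (h : ZArrow QArrow x y) : x.1 ≤ y.1 := by
  rcases h with ⟨h, -⟩ | ⟨h, -⟩ <;> omega

theorem ZArrow.qArrow_of_fst_eq {x y : ℤ × Q0} (h : ZArrow QArrow x y) (hxy : y.1 = x.1) :
    QArrow x.2 y.2 := by
  rcases h with ⟨-, h⟩ | ⟨h, -⟩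
  · exact h
  · omega

theorem hasNoDirectedCycle_zArrow (hQ : HasNoDirectedCycle QArrow) :
    HasNoDirectedCycle (ZArrow QArrow) := by
  intro p t ht hp hclosed
  have hlevel (i : ℕ) (hi : i ≤ t) : (p i).1 = (p 0).1 :=
    hp.apply_eq_of_apply_eq Prod.fst (fun _ _ => ZArrow.fst_le) (by rw [hclosed]) hi
  refine hQ (fun i => (p i).2) t ht (fun i hi => ?_) (congrArg Prod.snd hclosed)
  exact (hp i hi).qArrow_of_fst_eq (by rw [hlevel i hi.le, hlevel (i + 1) hi])

def heightGraph (f : Q0 → ℤ) : Set (ℤ × Q0) := {x | x.1 = f x.2}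

@[simp]
theorem mem_heightGraph {f : Q0 → ℤ} {x : ℤ × Q0} : x ∈ heightGraph f ↔ x.1 = f x.2 := Iff.rfl

theorem existsUnique_zpow_mem_heightGraph (f : Q0 → ℤ) (x : ℤ × Q0) :
    ∃! n : ℤ, (tauZQ Q0 ^ n) x ∈ heightGraph f := by
  simp only [tauZQ_zpow_apply, mem_heightGraph]
  exact ⟨x.1 - f x.2, by ring, fun n hn => by omega⟩

theorem exists_eq_heightGraph {S : Set (ℤ × Q0)} (hS : ∀ x, ∃! n : ℤ, (tauZQ Q0 ^ n) x ∈ S) :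
    ∃ f : Q0 → ℤ, S = heightGraph f := by
  choose n hn huniq using fun q : Q0 => hS (0, q)
  simp only [tauZQ_zpow_apply, zero_sub] at hn huniq
  refine ⟨fun q => -n q, Set.ext fun x => ⟨fun hx => ?_, fun hx => ?_⟩⟩
  · have := huniq x.2 (-x.1) (by simpa using hx)
    simp only [mem_heightGraph]
    omega
  · rw [mem_heightGraph] at hx
    rw [← Prod.mk.eta (p := x), hx]
    exact hn x.2

def IsSectionHeight (QArrow : Q0 → Q0 → Prop) (f : Q0 → ℤ) : Prop :=
  ∀ p q, QArrow p q → f q = f p ∨ f q + 1 = f p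

namespace IsSectionHeight

variable {f : Q0 → ℤ}

theorem zArrow_or_zArrow (hf : IsSectionHeight QArrow f) {p q : Q0} (hpq : QArrow p q) :
    ZArrow QArrow (f p, p) (f q, q) ∨ ZArrow QArrow (f q, q) (f p, p) := by
  rcases hf p q hpq with h | h
  · exact .inl (.inl ⟨h, hpq⟩)
  · exact .inr (.inr ⟨h.symm, hpq⟩)

theorem sub_le_sub_of_zArrow (hf : IsSectionHeight QArrow f) {x y : ℤ × Q0}
    (h : ZArrow QArrow x y) : x.1 - f x.2 ≤ y.1 - f y.2 := by
  rcases h with ⟨h, hQ⟩ | ⟨h, hQ⟩ <;> rcases hf _ _ hQ with h' | h' <;> omega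

theorem connectedOn_heightGraph (hf : IsSectionHeight QArrow f)
    (hconn : (underlyingGraph QArrow).Connected) :
    ConnectedOn (ZArrow QArrow) (heightGraph f) := by
  rintro ⟨a, p⟩ ha ⟨b, q⟩ hb
  obtain rfl : a = f p := ha
  obtain rfl : b = f q := hb
  refine ((SimpleGraph.reachable_iff_reflTransGen p q).mp (hconn p q)).lift
    (fun r => (f r, r)) fun r s ⟨_, hrs⟩ => ⟨rfl, rfl, ?_⟩
  rcases hrs with h | h
  · exact hf.zArrow_or_zArrow h
  · exact (hf.zArrow_or_zArrow h).symm

theorem isSection_heightGraph (hf : IsSectionHeight QArrow f)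
    (hconn : (underlyingGraph QArrow).Connected) (hQ : HasNoDirectedCycle QArrow) :
    IsSection (ZArrow QArrow) (tauZQ Q0) (heightGraph f) := by
  refine ⟨hf.connectedOn_heightGraph hconn,
    fun p t ht hp _ => hasNoDirectedCycle_zArrow hQ p t ht hp,
    existsUnique_zpow_mem_heightGraph f, fun p t hp h0 ht i hi => ?_⟩
  have := hp.apply_eq_of_apply_eq (fun x => x.1 - f x.2) (fun _ _ => hf.sub_le_sub_of_zArrow)
    (by simp_all) hi
  simp only [mem_heightGraph] at h0 ⊢
  omega

end IsSectionHeight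

section OfIsSection

variable {f : Q0 → ℤ} (hS : IsSection (ZArrow QArrow) (tauZQ Q0) (heightGraph f))
include hS

theorem qArrow_asymm_of_isSection {p q : Q0} (hpq : QArrow p q) : ¬QArrow q p := by
  intro hqp
  let w : ℕ → ℤ × Q0 := fun i => if i = 1 then (f p, q) else (f p, p)
  have hw : IsPathOn (ZArrow QArrow) w 2 := by
    intro i hi
    interval_cases i <;> simp [w, ZArrow, hpq, hqp]
  -- convexity puts the middle vertex `(f p, q)` into the section
  have hmid : w 1 ∈ heightGraph f := hS.2.2.2 w 2 hw rfl rfl 1 (by norm_num)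
  refine hS.2.1 w 2 two_pos hw (fun i hi => ?_) rfl
  interval_cases i
  · rfl
  · exact hmid
  · rfl

theorem zArrow_or_zArrow_of_adj (hT : (underlyingGraph QArrow).IsAcyclic) {p q : Q0}
    (hpq : (underlyingGraph QArrow).Adj p q) :
    ZArrow QArrow (f p, p) (f q, q) ∨ ZArrow QArrow (f q, q) (f p, p) := by
  by_contra hnot
  -- a chain in the section from `(f p, p)` to `(f q, q)` avoiding that arrow would project to
  -- a walk from `p` to `q` avoiding the bridge `p — q`
  refine SimpleGraph.isAcyclic_iff_forall_adj_isBridge.mp hT hpq ?_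
  rw [SimpleGraph.reachable_iff_reflTransGen]
  refine (hS.1 (f p, p) rfl (f q, q) rfl).lift Prod.snd ?_
  rintro ⟨a, r⟩ ⟨b, s⟩ ⟨ha, hb, hab⟩
  obtain rfl : a = f r := ha
  obtain rfl : b = f s := hb
  have hrs : QArrow r s ∨ QArrow s r := by
    rcases hab with (⟨-, h⟩ | ⟨-, h⟩) | (⟨-, h⟩ | ⟨-, h⟩) <;> tauto
  have hne : r ≠ s := by
    rintro rfl
    exact hrs.elim (fun h => qArrow_asymm_of_isSection hS h h)
      (fun h => qArrow_asymm_of_isSection hS h h)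
  refine SimpleGraph.deleteEdges_adj.mpr ⟨⟨hne, hrs⟩, ?_⟩
  rw [Set.mem_singleton_iff, Sym2.eq_iff]
  rintro (⟨rfl, rfl⟩ | ⟨rfl, rfl⟩)
  · exact hnot hab
  · exact hnot hab.symm

theorem isSectionHeight_of_isSection (hT : (underlyingGraph QArrow).IsAcyclic) :
    IsSectionHeight QArrow f := by
  intro p q hpq
  by_cases hne : p = q
  · exact .inl (congrArg f hne.symm)
  rcases zArrow_or_zArrow_of_adj hS hT ⟨hne, .inl hpq⟩ with (⟨h, -⟩ | ⟨-, h⟩) | (⟨h, -⟩ | ⟨h, -⟩)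
  · exact .inl h
  · exact (qArrow_asymm_of_isSection hS hpq h).elim
  · exact .inl h.symm
  · exact .inr h.symm

theorem hasNoDirectedCycle_of_isSection (hf : IsSectionHeight QArrow f) :
    HasNoDirectedCycle QArrow := by
  intro w t ht hw hclosed
  -- `f` does not increase along arrows of `Q`, so it is constant on a directed cycle, which
  -- therefore lifts to a cycle inside one level of the section
  have hconst (i : ℕ) (hi : i ≤ t) : f (w i) = f (w 0) := by
    have := hw.apply_eq_of_apply_eq (fun q => -f q)
      (fun a b hab => by rcases hf a b hab with h | h <;> omega) (by rw [hclosed]) hi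
    omega
  refine hS.2.1 (fun i => (f (w i), w i)) t ht (fun i hi => .inl ⟨?_, hw i hi⟩) (fun _ _ => rfl)
    (by rw [hclosed])
  change f (w (i + 1)) = f (w i)
  rw [hconst i hi.le, hconst (i + 1) hi]

end OfIsSection

open Classical in
noncomputable def glueHeight (f : Q0 → ℤ) (SM : Set (ℤ × Q0)) (q : Q0) : ℤ :=
  if (f q, q) ∈ SM then f q else f q - 1

section Glue

variable {f : Q0 → ℤ} {SM SN : Set (ℤ × Q0)}

theorem union_image_tauZQ_eq_heightGraph (hunion : heightGraph f = SM ∪ SN)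
    (hdisj : Disjoint SM SN) : SM ∪ tauZQ Q0 '' SN = heightGraph (glueHeight f SM) := by
  have hlevel {x : ℤ × Q0} (hx : x ∈ SM ∪ SN) : x.1 = f x.2 := by rw [← hunion] at hx; exact hx
  have hcover (q : Q0) : (f q, q) ∈ SM ∪ SN := by rw [← hunion]; rfl
  ext ⟨c, q⟩
  simp only [Set.mem_union, mem_image_tauZQ, mem_heightGraph, glueHeight]
  split_ifs with hq
  · refine ⟨fun h => h.elim (fun h => hlevel (.inl h)) fun h => ?_, fun h => .inl (h ▸ hq)⟩
    have hc : c + 1 = f q := hlevel (.inr h)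
    exact (Set.disjoint_left.mp hdisj hq (hc ▸ h)).elim
  · refine ⟨fun h => h.elim (fun h => ?_) fun h => ?_, fun h => .inr ?_⟩
    · exact (hq (hlevel (.inl h) ▸ h)).elim
    · have : c + 1 = f q := hlevel (.inr h)
      omega
    · rw [h, sub_add_cancel]
      exact (hcover q).resolve_left hq

theorem IsSectionHeight.glueHeight (hf : IsSectionHeight QArrow f)
    (hasymm : ∀ p q, QArrow p q → ¬QArrow q p) (hunion : heightGraph f = SM ∪ SN)
    {L N : ℤ × Q0} (hLN : ZArrow QArrow L N)
    (hcut : ∀ x ∈ SM, ∀ y ∈ SN, (ZArrow QArrow x y ∨ ZArrow QArrow y x) → x = L ∧ y = N) :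
    IsSectionHeight QArrow (glueHeight f SM) := by
  have hcover (q : Q0) (hq : (f q, q) ∉ SM) : (f q, q) ∈ SN := by
    have : (f q, q) ∈ heightGraph f := rfl
    rw [hunion] at this
    exact this.resolve_left hq
  intro p q hpq
  by_cases hp : (f p, p) ∈ SM <;> by_cases hq : (f q, q) ∈ SM <;>
    simp only [Stmt14.glueHeight, hp, hq, if_true, if_false]
  · exact hf p q hpq
  · obtain ⟨rfl, rfl⟩ := hcut _ hp _ (hcover q hq) (hf.zArrow_or_zArrow hpq)
    rcases hLN with ⟨h, -⟩ | ⟨-, h⟩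
    · exact .inr (by omega)
    · exact (hasymm p q hpq h).elim
  · obtain ⟨rfl, rfl⟩ := hcut _ hq _ (hcover p hp) (hf.zArrow_or_zArrow hpq).symm
    rcases hLN with ⟨-, h⟩ | ⟨h, -⟩
    · exact (hasymm p q hpq h).elim
    · exact .inl (by omega)
  · rcases hf p q hpq with h | h
    · exact .inl (by omega)
    · exact .inr (by omega)

end Glue

theorem glue_section_along_orbit_cut_general
    (QArrow : Q0 → Q0 → Prop)
    -- Q is a tree quiver
    (hTree : (underlyingGraph QArrow).IsTree)
    (S1 : Set (ℤ × Q0))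
    (hS1 : IsSection (ZArrow QArrow) (tauZQ Q0) S1)
    (M L N : ℤ × Q0)
    -- the arrow L → N of Σ₁
    (hLN : ZArrow QArrow L N)
    -- removing the edge L — N splits Σ₁ into two subtrees SM ∋ M, L and SN ∋ N
    (SM SN : Set (ℤ × Q0))
    (hunion : S1 = SM ∪ SN) (hdisj : Disjoint SM SN)
    (hMin : M ∈ SM)
    -- the only edge of Σ₁ between the two parts is L — N
    (hcut : ∀ x ∈ SM, ∀ y ∈ SN,
      (ZArrow QArrow x y ∨ ZArrow QArrow y x) → x = L ∧ y = N) :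
    -- conclusion: Σ₂ = SM ∪ τSN is again a section containing M
    IsSection (ZArrow QArrow) (tauZQ Q0) (SM ∪ (tauZQ Q0) '' SN) ∧
    M ∈ SM ∪ (tauZQ Q0) '' SN := by
  obtain ⟨f, rfl⟩ := exists_eq_heightGraph hS1.2.2.1
  have hf : IsSectionHeight QArrow f := isSectionHeight_of_isSection hS1 hTree.isAcyclic
  have hglue : IsSectionHeight QArrow (glueHeight f SM) :=
    hf.glueHeight (fun _ _ => qArrow_asymm_of_isSection hS1) hunion hLN hcut
  refine ⟨?_, .inl hMin⟩
  rw [union_image_tauZQ_eq_heightGraph hunion hdisj]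
  exact hglue.isSection_heightGraph hTree.connected (hasNoDirectedCycle_of_isSection hS1 hf)

theorem glue_section_along_orbit_cut
    [Fintype Q0] (QArrow : Q0 → Q0 → Prop)
    -- Q is a tree quiver
    (hTree : (underlyingGraph QArrow).IsTree)
    (S1 : Set (ℤ × Q0))
    (hS1 : IsSection (ZArrow QArrow) (tauZQ Q0) S1)
    (M L N : ℤ × Q0) (hM : M ∈ S1) (hL : L ∈ S1) (hN : N ∈ S1)
    -- the arrow L → N of Σ₁
    (hLN : ZArrow QArrow L N)
    -- removing the edge L — N splits Σ₁ into two subtrees SM ∋ M, L and SN ∋ N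
    (SM SN : Set (ℤ × Q0))
    (hunion : S1 = SM ∪ SN) (hdisj : Disjoint SM SN)
    (hMin : M ∈ SM) (hLin : L ∈ SM) (hNin : N ∈ SN)
    (hSMconn : ConnectedOn (ZArrow QArrow) SM)
    (hSNconn : ConnectedOn (ZArrow QArrow) SN)
    -- the only edge of Σ₁ between the two parts is L — N
    (hcut : ∀ x ∈ SM, ∀ y ∈ SN,
      (ZArrow QArrow x y ∨ ZArrow QArrow y x) → x = L ∧ y = N) :
    -- conclusion: Σ₂ = SM ∪ τSN is again a section containing M
    IsSection (ZArrow QArrow) (tauZQ Q0) (SM ∪ (tauZQ Q0) '' SN) ∧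
    M ∈ SM ∪ (tauZQ Q0) '' SN :=
  glue_section_along_orbit_cut_general QArrow hTree S1 hS1 M L N hLN SM SN hunion hdisj hMin hcut

end Stmt14
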